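/- Let (G, col) be a pushdown parity game with coloring col : Q → [n], let wv be a finite path in G starting at a configuration of stack height 0 (w a nonempty finite path, v a single configuration), and let c, c' ∈ [n]. If StairSc_c(wv) = StairSc_c(w) + 1 and StairSc_{c'}(wv) = StairSc_{c'}(w) + 1, then c = c'. In other words, at most one stair-scoring function is increased in any round. -/

import Mathlib

namespace FDGames


/-- A game graph: ownership partition, edge relation, initial vertex, and
every vertex has at least one successor. -/
structure GameGraph (V : Type*) where
  own : V → Fin 2
  E : V → V → Prop
  vin : V
  succ : ∀ v, ∃ v', E v v'

/-- An infinite play: starts at the initial vertex and follows edges. -/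
def IsPlay {V : Type*} (G : GameGraph V) (ρ : ℕ → V) : Prop :=
  ρ 0 = G.vin ∧ ∀ m, G.E (ρ m) (ρ (m + 1))

/-- A play consistent with the strategy `σ` of Player `i`; the strategy gets the
history (the vertices strictly before the current one) and the current vertex. -/
def ConsistentPlay {V : Type*} (G : GameGraph V) (i : Fin 2)
    (σ : List V → V → V) (ρ : ℕ → V) : Prop :=
  IsPlay G ρ ∧ ∀ m, G.own (ρ m) = i → ρ (m + 1) = σ ((List.range m).map ρ) (ρ m)

/-- The minimal color seen infinitely often along `ρ`. -/
noncomputable def minInfCol {V : Type*} (col : V → ℕ) (ρ : ℕ → V) : ℕ :=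
  sInf {c | ∀ N, ∃ m, N ≤ m ∧ col (ρ m) = c}

/-- The play `ρ` is winning for Player `i` in the (min-) parity game. -/
def WinningPlay {V : Type*} (col : V → ℕ) (i : Fin 2) (ρ : ℕ → V) : Prop :=
  minInfCol col ρ % 2 = (i : ℕ)

/-- A (legal) strategy always moves along edges. -/
def IsStrategy {V : Type*} (G : GameGraph V) (σ : List V → V → V) : Prop :=
  ∀ h v, G.E v (σ h v)

/-- A positional strategy only depends on the current vertex. -/
def Positional {V : Type*} (σ : List V → V → V) : Prop :=
  ∀ h h' v, σ h v = σ h' v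

/-- A winning strategy for Player `i` in the parity game `(G, col)`. -/
def WinningStrategy {V : Type*} (G : GameGraph V) (col : V → ℕ) (i : Fin 2)
    (σ : List V → V → V) : Prop :=
  IsStrategy G σ ∧ ∀ ρ, ConsistentPlay G i σ ρ → WinningPlay col i ρ

/-- Player `i` wins the parity game `(G, col)`. -/
def WinsGame {V : Type*} (G : GameGraph V) (col : V → ℕ) (i : Fin 2) : Prop :=
  ∃ σ, WinningStrategy G col i σ

/-- A pushdown system.  The bottom-of-stack symbol `⊥` is kept implicit: a stack
content is the list of symbols from `Γ` strictly above `⊥` (top = head), and the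
top-of-stack symbol read by a transition is an `Option Γ` (`none` = `⊥`).  Since
`⊥` can neither be written nor deleted, a transition reading a symbol of `Γ`
rewrites it to at most two symbols of `Γ`, and a transition reading `⊥` writes at
most one symbol of `Γ` above `⊥`.  The system is deadlock-free. -/
structure PDS (Q Γ : Type*) where
  qin : Q
  Δ : Set (Q × Option Γ × Q × List Γ)
  bound2 : ∀ q A p α, (q, A, p, α) ∈ Δ → α.length ≤ 2
  bound1 : ∀ q p α, (q, (none : Option Γ), p, α) ∈ Δ → α.length ≤ 1
  df : ∀ q A, ∃ q' α, (q, A, q', α) ∈ Δ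

/-- Configurations: a state together with the stack content above `⊥`. -/
abbrev Config (Q Γ : Type*) := Q × List Γ

/-- The stack height of a configuration. -/
def confSh {Q Γ : Type*} (v : Config Q Γ) : ℕ := v.2.length

/-- One step of the pushdown system between configurations. -/
def PDS.step {Q Γ : Type*} (P : PDS Q Γ) (u v : Config Q Γ) : Prop :=
  (u.2 = [] ∧ (u.1, (none : Option Γ), v.1, v.2) ∈ P.Δ) ∨
  (∃ a rest α, u.2 = a :: rest ∧ (u.1, some a, v.1, α) ∈ P.Δ ∧ v.2 = α ++ rest)

/-- The pushdown game graph induced by a PDS and a partition of its states. -/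
def PDS.graph {Q Γ : Type*} (P : PDS Q Γ) (own : Q → Fin 2) :
    GameGraph (Config Q Γ) where
  own := fun v => own v.1
  E := P.step
  vin := (P.qin, [])
  succ := by
    rintro ⟨q, _ | ⟨a, rest⟩⟩
    · obtain ⟨q', α, h⟩ := P.df q none
      exact ⟨(q', α), Or.inl ⟨rfl, h⟩⟩
    · obtain ⟨q', α, h⟩ := P.df q (some a)
      exact ⟨(q', α ++ rest), Or.inr ⟨a, rest, α, rfl, h, rfl⟩⟩

/-- The stair positions of a sequence of stack heights. -/
def stairPositions (hs : List ℕ) : Finset ℕ :=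
  (Finset.range hs.length).filter fun m =>
    ∀ m' < hs.length, m ≤ m' → hs.getD m 0 ≤ hs.getD m' 0

/-- For a word of (color, stack height) pairs, the position where `lastBump`
starts, i.e. `l + 1` for the second largest stair position `l` (and `0` if there
is no such position). -/
def bumpStart (w : List (ℕ × ℕ)) : ℕ :=
  ((Finset.range (w.length - 1)).filter
    fun l => (w.getD l (0, 0)).2 ≤ ((w.getLast?).getD (0, 0)).2).sup (· + 1)

theorem bumpStart_lt {w : List (ℕ × ℕ)} (h : w ≠ []) : bumpStart w < w.length := by
  have h1 : 0 < w.length := List.length_pos_iff.mpr h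
  have h2 : bumpStart w ≤ w.length - 1 := by
    apply Finset.sup_le
    intro l hl
    have := Finset.mem_range.mp (Finset.mem_filter.mp hl).1
    omega
  omega

/-- The minimal color occurring in a word of (color, stack height) pairs. -/
def minColList (w : List (ℕ × ℕ)) : ℕ := ((w.map Prod.fst).minimum).getD 0

/-- The stair-scoring function `StairSc_c`, on words of (color, stack height)
pairs.  `w.take (bumpStart w)` is `Reset(w)` and `w.drop (bumpStart w)` is
`lastBump(w)`. -/
def StairSc (c : ℕ) (w : List (ℕ × ℕ)) : ℕ :=
  if h : w = [] then 0
  else if c < minColList (w.drop (bumpStart w)) then StairSc c (w.take (bumpStart w))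
  else if minColList (w.drop (bumpStart w)) = c then StairSc c (w.take (bumpStart w)) + 1
  else 0
termination_by w.length
decreasing_by
  all_goals
    have hlt := bumpStart_lt h
    simp only [List.length_take]
    omega

/-- Maximum of `StairSc_c` over all prefixes. -/
def MaxStairSc (c : ℕ) (w : List (ℕ × ℕ)) : ℕ :=
  (Finset.range (w.length + 1)).sup fun m => StairSc c (w.take m)

/-- The word of (color, stack height) pairs associated to a path of
configurations. -/
def toCH {Q Γ : Type*} (col : Q → ℕ) (w : List (Config Q Γ)) : List (ℕ × ℕ) :=
  w.map fun v => (col v.1, v.2.length)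

/-! If the last bump of `wv` has minimal colour below `c`, then `StairSc_c(wv) = 0`; if it is
above `c`, then `StairSc_c(wv) = StairSc_c(Reset(wv)) = StairSc_c(w)`, because the vertex closing
`Reset(wv)` is a stair of `w` and all later vertices of `w` have colour above `c`, so they only
ever trigger resets. Hence an increase of `StairSc_c` forces `MinCol(lastBump(wv)) = c`, and
that minimal colour does not depend on `c`. -/

def reset (w : List (ℕ × ℕ)) : List (ℕ × ℕ) := w.take (bumpStart w)

def lastBump (w : List (ℕ × ℕ)) : List (ℕ × ℕ) := w.drop (bumpStart w)

theorem lt_minColList_iff {u : List (ℕ × ℕ)} (hu : u ≠ []) {c : ℕ} :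
    c < minColList u ↔ ∀ y ∈ u, c < y.1 := by
  obtain ⟨m, hm⟩ := WithTop.ne_top_iff_exists.mp
    (List.minimum_ne_top_of_ne_nil (l := u.map Prod.fst) (by simpa using hu))
  obtain ⟨-, hmin⟩ := List.minimum_eq_coe_iff.mp hm.symm
  have hcol : minColList u = m := by rw [minColList, ← hm]; rfl
  rw [hcol]
  refine ⟨fun h y hy => h.trans_le (hmin _ (List.mem_map_of_mem hy)), fun h => ?_⟩
  obtain ⟨y, hy, rfl⟩ := List.mem_map.mp (List.minimum_mem hm.symm)
  exact h y hy

theorem StairSc_of_lt_minColList {c : ℕ} {w : List (ℕ × ℕ)} (hw : w ≠ [])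
    (h : c < minColList (lastBump w)) : StairSc c w = StairSc c (reset w) := by
  unfold lastBump at h
  rw [StairSc, dif_neg hw, if_pos h, reset]

theorem StairSc_eq_zero_of_minColList_lt {c : ℕ} {w : List (ℕ × ℕ)}
    (h : minColList (lastBump w) < c) : StairSc c w = 0 := by
  rw [StairSc]
  unfold lastBump at h
  split_ifs <;> first | rfl | omega

theorem bumpStart_append_singleton (w : List (ℕ × ℕ)) (x : ℕ × ℕ) :
    bumpStart (w ++ [x]) =
      ((Finset.range w.length).filter fun l => (w.getD l (0, 0)).2 ≤ x.2).sup (· + 1) := by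
  simp only [bumpStart, List.length_append, List.length_singleton, Nat.add_sub_cancel,
    List.getLast?_concat, Option.getD_some]
  congr 1
  refine Finset.filter_congr fun l hl => ?_
  rw [List.getD_append _ _ _ _ (Finset.mem_range.mp hl)]

theorem le_bumpStart_append_singleton {w : List (ℕ × ℕ)} {x : ℕ × ℕ} {j : ℕ}
    (hj : j < w.length) (h : w[j].2 ≤ x.2) : j + 1 ≤ bumpStart (w ++ [x]) := by
  rw [bumpStart_append_singleton]
  exact Finset.le_sup (f := (· + 1))
    (Finset.mem_filter.mpr ⟨Finset.mem_range.mpr hj, by rwa [List.getD_eq_getElem _ _ hj]⟩)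

theorem lt_of_mem_drop_bumpStart {w : List (ℕ × ℕ)} {x y : ℕ × ℕ}
    (hy : y ∈ w.drop (bumpStart (w ++ [x]))) : x.2 < y.2 := by
  obtain ⟨j, hj, rfl⟩ := List.mem_drop_iff_getElem.mp hy
  by_contra! h
  have := le_bumpStart_append_singleton (by omega) h
  omega

theorem le_of_mem_getLast?_take_bumpStart {w : List (ℕ × ℕ)} {x z : ℕ × ℕ}
    (hz : z ∈ (w.take (bumpStart (w ++ [x]))).getLast?) : z.2 ≤ x.2 := by
  rw [bumpStart_append_singleton] at hz
  set S := (Finset.range w.length).filter fun l => (w.getD l (0, 0)).2 ≤ x.2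
  rcases S.eq_empty_or_nonempty with hS | hS
  · simp [hS] at hz
  obtain ⟨l, hl, hsup⟩ := Finset.exists_mem_eq_sup S hS (· + 1)
  obtain ⟨hlw, hlx⟩ := Finset.mem_filter.mp hl
  rw [Finset.mem_range] at hlw
  rw [hsup, List.getLast?_take] at hz
  simp only [Nat.add_one_ne_zero, if_false, Nat.add_sub_cancel, List.getElem?_eq_getElem hlw,
    Option.some_or, Option.mem_def, Option.some.injEq] at hz
  rwa [List.getD_eq_getElem _ _ hlw, hz] at hlx

/-- The last bump of `s ++ t` starts at or after the stair closing `s`, so its colours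
all exceed `c` and the score only resets. -/
theorem StairSc_append_of_stair {c : ℕ} (s t : List (ℕ × ℕ))
    (hstair : ∀ z ∈ s.getLast?, ∀ y ∈ t, z.2 ≤ y.2) (hcol : ∀ y ∈ t, c < y.1) :
    StairSc c (s ++ t) = StairSc c s := by
  rcases t.eq_nil_or_concat with rfl | ⟨t', y, ht⟩
  · rw [List.append_nil]
  have hne : s ++ t ≠ [] := by simp [ht]
  set b := bumpStart (s ++ t)
  have hb : b < s.length + t.length := by simpa using bumpStart_lt hne
  have hsb : s.length ≤ b := by
    rcases s.eq_nil_or_concat with rfl | ⟨s', z, rfl⟩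
    · exact Nat.zero_le _
    have hzy : z.2 ≤ y.2 := hstair z (by simp) y (by simp [ht])
    have := le_bumpStart_append_singleton (w := s' ++ z :: t') (j := s'.length) (x := y)
      (by simp) (by simpa using hzy)
    simpa [b, ht] using this
  have hreset : reset (s ++ t) = s ++ t.take (b - s.length) := by
    rw [reset, List.take_append, List.take_of_length_le hsb]
  have hbump : lastBump (s ++ t) = t.drop (b - s.length) := by
    rw [lastBump, List.drop_append, List.drop_of_length_le hsb, List.nil_append]
  have hbump_ne : t.drop (b - s.length) ≠ [] := by
    rw [← List.length_pos_iff, List.length_drop]; omega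
  rw [StairSc_of_lt_minColList hne, hreset]
  · exact StairSc_append_of_stair s _
      (fun z hz y hy => hstair z hz y (List.mem_of_mem_take hy))
      (fun y hy => hcol y (List.mem_of_mem_take hy))
  · rw [hbump, lt_minColList_iff hbump_ne]
    exact fun y hy => hcol y (List.mem_of_mem_drop hy)
termination_by t.length
decreasing_by
  simp only [List.length_take]
  omega

theorem StairSc_append_singleton_of_lt_minColList {c : ℕ} {w : List (ℕ × ℕ)} {x : ℕ × ℕ}
    (h : c < minColList (lastBump (w ++ [x]))) : StairSc c (w ++ [x]) = StairSc c w := by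
  set b := bumpStart (w ++ [x])
  have hb : b ≤ w.length := by simpa [Nat.lt_succ_iff] using bumpStart_lt (w := w ++ [x]) (by simp)
  have hreset : reset (w ++ [x]) = w.take b := List.take_append_of_le_length hb
  have hbump : lastBump (w ++ [x]) = w.drop b ++ [x] := List.drop_append_of_le_length hb
  rw [StairSc_of_lt_minColList (by simp) h, hreset]
  conv_rhs => rw [← List.take_append_drop b w]
  refine (StairSc_append_of_stair _ _ (fun z hz y hy => ?_) (fun y hy => ?_)).symm
  · exact (le_of_mem_getLast?_take_bumpStart hz).trans (lt_of_mem_drop_bumpStart hy).le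
  · rw [hbump, lt_minColList_iff (by simp)] at h
    exact h y (List.mem_append_left _ hy)

theorem minColList_lastBump_eq_of_StairSc_append_singleton {c : ℕ} {w : List (ℕ × ℕ)}
    {x : ℕ × ℕ} (h : StairSc c (w ++ [x]) = StairSc c w + 1) :
    minColList (lastBump (w ++ [x])) = c := by
  rcases lt_trichotomy c (minColList (lastBump (w ++ [x]))) with hlt | heq | hgt
  · rw [StairSc_append_singleton_of_lt_minColList hlt] at h
    omega
  · exact heq.symm
  · rw [StairSc_eq_zero_of_minColList_lt hgt] at h
    omega

theorem stmt11_general {Q Γ : Type*} (col : Q → ℕ)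
    (w : List (Config Q Γ)) (v : Config Q Γ)
    (c c' : ℕ)
    (h1 : StairSc c (toCH col (w ++ [v])) = StairSc c (toCH col w) + 1)
    (h2 : StairSc c' (toCH col (w ++ [v])) = StairSc c' (toCH col w) + 1) :
    c = c' := by
  have happend : toCH col (w ++ [v]) = toCH col w ++ [(col v.1, v.2.length)] := by
    simp [toCH]
  rw [happend] at h1 h2
  rw [← minColList_lastBump_eq_of_StairSc_append_singleton h1,
    minColList_lastBump_eq_of_StairSc_append_singleton h2]

/-- Lemma 4: at most one stair-scoring function is increased in any round. -/
theorem stmt11 {Q Γ : Type*} [Finite Q] [Finite Γ] (P : PDS Q Γ) (n : ℕ)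
    (col : Q → ℕ) (hcol : ∀ q, col q < n)
    (w : List (Config Q Γ)) (v : Config Q Γ) (hw : w ≠ [])
    (hchain : (w ++ [v]).Chain' P.step) (hhead : ∃ q, w.head? = some (q, []))
    (c c' : ℕ) (hc : c < n) (hc' : c' < n)
    (h1 : StairSc c (toCH col (w ++ [v])) = StairSc c (toCH col w) + 1)
    (h2 : StairSc c' (toCH col (w ++ [v])) = StairSc c' (toCH col w) + 1) :
    c = c' :=
  stmt11_general col w v c c' h1 h2

end FDGames
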